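/- arXiv:1905.01874 — 2 statements merged into one kernel-verified Lean document; each statement's English description precedes it below -/
import Mathlib

section
/- Let n ≥ 4 and let r = ⌈(mn+4)/(2m+2n)⌉ with m ≥ n, and set s = ⌈n/2⌉ − r. If s = r, then n ≡ 3 (mod 4) and m ∈ {n, n+1}. -/
/-!
Since `s = r`, we have `⌈n/2⌉ = 2r`, so `4r ∈ {n, n + 1}`. The ceiling defining `r` gives
`4(mn + 4) ≤ 4r(2m + 2n)`. For `4r = n` this reads `mn + 8 ≤ n²`, impossible as `m ≥ n`;
so `4r = n + 1`, i.e. `n ≡ 3 (mod 4)`, and the inequality becomes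
`(m - n)(n - 1) + 8 ≤ 2n`, which fails once `m ≥ n + 2`.
-/

theorem Int.ceil_intCast_div_eq_iff {K : Type*} [Field K] [LinearOrder K] [IsStrictOrderedRing K]
    [FloorRing K] {a b r : ℤ} (hb : 0 < b) :
    ⌈(a : K) / b⌉ = r ↔ (r - 1) * b < a ∧ a ≤ r * b := by
  have hb' : (0 : K) < b := Int.cast_pos.mpr hb
  rw [Int.ceil_eq_iff, ← Int.cast_one, ← Int.cast_sub, lt_div_iff₀ hb', div_le_iff₀ hb']
  norm_cast

theorem not_two_mul_mul_add_four_le {m n : ℤ} (hn : 0 ≤ n) (hmn : n ≤ m) :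
    ¬ 2 * (m * n + 4) ≤ n * (m + n) := by
  nlinarith [mul_le_mul_of_nonneg_left hmn hn]

theorem le_add_one_of_two_mul_mul_add_four_le {m n : ℤ} (hn : 1 ≤ n)
    (h : 2 * (m * n + 4) ≤ (n + 1) * (m + n)) : m ≤ n + 1 := by
  nlinarith

/-- For `m ≥ n ≥ 4`, with `r = ⌈(mn+4)/(2m+2n)⌉` and `s = ⌈n/2⌉ - r`,
if `s = r` then `n ≡ 3 (mod 4)` and `m ∈ {n, n+1}`. -/
theorem stmt5 (m n : ℕ) (hn : 4 ≤ n) (hmn : n ≤ m) (r s : ℤ)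
    (hr : r = ⌈((m * n + 4 : ℚ)) / (2 * m + 2 * n)⌉)
    (hs : s = ⌈(n : ℚ) / 2⌉ - r)
    (hsr : s = r) :
    n % 4 = 3 ∧ (m = n ∨ m = n + 1) := by
  have hr' : ⌈(((m * n + 4 : ℤ) : ℚ)) / ((2 * m + 2 * n : ℤ) : ℚ)⌉ = r := by
    rw [hr]; push_cast; rfl
  have hhalf : ⌈((n : ℤ) : ℚ) / ((2 : ℤ) : ℚ)⌉ = 2 * r := by
    push_cast; omega
  have hr_lower := ((Int.ceil_intCast_div_eq_iff (by omega)).mp hr').2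
  have hhalf_bounds := (Int.ceil_intCast_div_eq_iff (by norm_num)).mp hhalf
  have hkey : 2 * ((m : ℤ) * n + 4) ≤ 4 * r * (m + n) := by linarith
  have h4r : 4 * r = n + 1 := by
    obtain h | h : 4 * r = n ∨ 4 * r = n + 1 := by omega
    · rw [h] at hkey
      exact absurd hkey (not_two_mul_mul_add_four_le (by omega) (by omega))
    · exact h
  rw [h4r] at hkey
  have hm := le_add_one_of_two_mul_mul_add_four_le (by omega) hkey
  omega
end

section
/- For positive integers m ≥ n ≥ 4 with r = ⌈(mn+4)/(2m+2n)⌉ and s = ⌈n/2⌉ − r, if it is not the case that (n ≡ 3 mod 4 and m ∈ {n, n+1}), and r ≤ ⌊(n−1)/2⌋, then s < n/4 < r. -/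
/-- For `m ≥ n ≥ 4` with `r = ⌈(mn+4)/(2m+2n)⌉` and `s = ⌈n/2⌉ - r`,
if it is not the case that `n ≡ 3 (mod 4)` and `m ∈ {n, n+1}`, and
`r ≤ ⌊(n-1)/2⌋`, then `s < n/4 < r`. -/
theorem stmt6 (m n : ℕ) (hn : 4 ≤ n) (hmn : n ≤ m) (r s : ℤ)
    (hr : r = ⌈((m * n + 4 : ℚ)) / (2 * m + 2 * n)⌉)
    (hs : s = ⌈(n : ℚ) / 2⌉ - r)
    (hnot : ¬(n % 4 = 3 ∧ (m = n ∨ m = n + 1)))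
    (hr2 : r ≤ ⌊((n : ℚ) - 1) / 2⌋) :
    (s : ℚ) < (n : ℚ) / 4 ∧ (n : ℚ) / 4 < (r : ℚ) := by
  have hnq : (4:ℚ) ≤ n := by exact_mod_cast hn
  have hmnq : (n:ℚ) ≤ m := by exact_mod_cast hmn
  have hden : (0:ℚ) < 2*m+2*n := by positivity
  have hceil : ((m*n+4:ℚ))/(2*m+2*n) ≤ (r : ℚ) := by
    rw [hr]; exact Int.le_ceil _
  have hval : (n:ℚ)/4 < ((m*n+4:ℚ))/(2*m+2*n) := by
    rw [div_lt_div_iff₀ (by norm_num) hden]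
    nlinarith
  have h2 : (n:ℚ)/4 < (r : ℚ) := hval.trans_le hceil
  refine ⟨?_, h2⟩
  rcases Nat.even_or_odd n with ⟨a, ha⟩ | ⟨a, ha⟩
  · have hceil2 : ⌈(n:ℚ)/2⌉ = (a : ℤ) := by
      rw [ha]; push_cast
      rw [show ((a:ℚ)+a)/2 = (a:ℚ) by ring]
      exact Int.ceil_intCast a
    rw [hs, hceil2]
    push_cast
    have haq : (n : ℚ) = a + a := by exact_mod_cast ha
    linarith
  · have hceil2 : ⌈(n:ℚ)/2⌉ = (a : ℤ) + 1 := by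
      rw [ha, Int.ceil_eq_iff]
      push_cast
      constructor <;> [linarith; linarith]
    have haq : (n : ℚ) = 2 * a + 1 := by exact_mod_cast ha
    rcases Nat.even_or_odd a with ⟨b, hb⟩ | ⟨b, hb⟩
    · -- n = 4b+1
      have hbq : (a : ℚ) = b + b := by exact_mod_cast hb
      have hbr : (b : ℤ) < r := by
        have : (b : ℚ) < r := by linarith
        exact_mod_cast this
      have hbr' : (b : ℤ) + 1 ≤ r := hbr
      have : ((b : ℤ) + 1 : ℚ) ≤ r := by exact_mod_cast hbr'
      rw [hs, hceil2]
      push_cast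
      push_cast at this
      linarith
    · -- n = 4b+3
      have hn3 : n % 4 = 3 := by omega
      have hm2 : n + 2 ≤ m := by
        rcases Nat.lt_or_ge m (n+2) with h | h
        · exfalso; exact hnot ⟨hn3, by omega⟩
        · exact h
      have hm2q : (n : ℚ) + 2 ≤ m := by exact_mod_cast hm2
      have hbq : (a : ℚ) = 2 * b + 1 := by exact_mod_cast hb
      have hbr : (b : ℤ) + 1 < r := by
        rw [hr, Int.lt_ceil]
        push_cast
        rw [lt_div_iff₀ hden]
        nlinarith
      have hbr' : (b : ℤ) + 2 ≤ r := hbr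
      have hq : ((b : ℤ) + 2 : ℚ) ≤ r := by exact_mod_cast hbr'
      rw [hs, hceil2]
      push_cast
      push_cast at hq
      linarith
end
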